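/- (Quantization of the standard Gaussian, justification of (3.8).) Let γ_d denote the standard Gaussian measure N(0,I_d) on ℝ^d. For every p ≥ 1 there exists a constant C(p,d) such that for every M ∈ ℕ* there exists a finite set Λ ⊂ ℝ^d with at most M points satisfying (∫_{ℝ^d} min_{y∈Λ} |x − y|^p dγ_d(x))^{1/p} ≤ C(p,d) M^{−1/d}. Consequently, if Δ ~ N(0,I_d) and G_Λ denotes a nearest-point projection onto Λ, then E[|Δ − G_Λ(Δ)|^p]^{1/p} ≤ C(p,d) M^{−1/d}. -/

import Mathlib

open MeasureTheory ProbabilityTheory Real Set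
open scoped Classical ENNReal NNReal RealInnerProductSpace BigOperators

noncomputable section

/-- `ℝ^d` with the Euclidean structure. -/
abbrev Evec (d : ℕ) := EuclideanSpace ℝ (Fin d)

/-- The Gaussian measure `N(0, h I_d)` on `ℝ^d`. -/
noncomputable def gaussE (d : ℕ) (h : ℝ) : Measure (Evec d) :=
  Measure.map (⇑(EuclideanSpace.equiv (Fin d) ℝ).symm)
    (Measure.pi fun _ : Fin d => gaussianReal 0 h.toNNReal)

/-- Assumption (A): boundedness in space / linear growth in the other variables, uniform
Lipschitz continuity, uniform ellipticity of `a = σσ*`, and `H` bounded in `C^{2+α}`. -/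
structure AssumptionA (d : ℕ) (K lam alpha : ℝ)
    (b : Evec d → ℝ → Evec d → Evec d) (f : Evec d → ℝ → Evec d → ℝ)
    (sig : Evec d → ℝ → (Evec d →L[ℝ] Evec d)) (H : Evec d → ℝ) : Prop where
  hK : 0 < K
  growth_b : ∀ x y z, ‖b x y z‖ ≤ K * (1 + |y| + ‖z‖)
  growth_f : ∀ x y z, |f x y z| ≤ K * (1 + |y| + ‖z‖)
  growth_sig : ∀ x y, ‖sig x y‖ ≤ K * (1 + |y|)
  lip_b : ∀ x x' y y' z z',
    ‖b x y z - b x' y' z'‖ ≤ K * (‖x - x'‖ + |y - y'| + ‖z - z'‖)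
  lip_f : ∀ x x' y y' z z',
    |f x y z - f x' y' z'| ≤ K * (‖x - x'‖ + |y - y'| + ‖z - z'‖)
  lip_sig : ∀ x x' y y', ‖sig x y - sig x' y'‖ ≤ K * (‖x - x'‖ + |y - y'|)
  lip_H : ∀ x x', |H x - H x'| ≤ K * ‖x - x'‖
  hlam : 0 < lam
  elliptic : ∀ x y ξ,
    lam * ‖ξ‖ ^ 2 ≤ ⟪(sig x y) ((ContinuousLinearMap.adjoint (sig x y)) ξ), ξ⟫
  halpha : alpha ∈ Set.Ioo (0 : ℝ) 1
  H_smooth : ContDiff ℝ 2 H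
  H_bound : ∀ x, |H x| + ‖fderiv ℝ H x‖ + ‖fderiv ℝ (fderiv ℝ H) x‖ ≤ K
  H_holder : ∀ x x',
    ‖fderiv ℝ (fderiv ℝ H) x - fderiv ℝ (fderiv ℝ H) x'‖ ≤ K * ‖x - x'‖ ^ alpha

/-- `v(t,x) = ∇ₓu(t,x) σ(x,u(t,x))`, seen as the vector `σ(x,u(t,x))^* ∇ₓu(t,x)`. -/
def vSol {d : ℕ} (sig : Evec d → ℝ → (Evec d →L[ℝ] Evec d)) (u : ℝ → Evec d → ℝ)
    (t : ℝ) (x : Evec d) : Evec d :=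
  (ContinuousLinearMap.adjoint (sig x (u t x))) (gradient (u t) x)

/-- `tr(a(x,u) ∇²ₓₓ u) = tr(σ^* (∇²ₓₓ u) σ)`. -/
def traceTerm {d : ℕ} (sig : Evec d → ℝ → (Evec d →L[ℝ] Evec d)) (u : ℝ → Evec d → ℝ)
    (t : ℝ) (x : Evec d) : ℝ :=
  ∑ i : Fin d,
    ⟪fderiv ℝ (gradient (u t)) x ((sig x (u t x)) (EuclideanSpace.single i (1 : ℝ))),
      (sig x (u t x)) (EuclideanSpace.single i (1 : ℝ))⟫

/-- The quasi-linear PDE (E) holds at `(t,x)`. -/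
def PDEholds {d : ℕ} (b : Evec d → ℝ → Evec d → Evec d) (f : Evec d → ℝ → Evec d → ℝ)
    (sig : Evec d → ℝ → (Evec d →L[ℝ] Evec d)) (u : ℝ → Evec d → ℝ)
    (t : ℝ) (x : Evec d) : Prop :=
  deriv (fun s => u s x) t
    + ⟪b x (u t x) (vSol sig u t x), gradient (u t) x⟫
    + (1 / 2) * traceTerm sig u t x
    + f x (u t x) (vSol sig u t x) = 0

/-- `u` is a `C^{1,2}([0,T]×ℝ^d)` solution of the PDE (E). -/
structure IsSolC12 (d : ℕ) (T : ℝ) (b : Evec d → ℝ → Evec d → Evec d)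
    (f : Evec d → ℝ → Evec d → ℝ) (sig : Evec d → ℝ → (Evec d →L[ℝ] Evec d))
    (H : Evec d → ℝ) (u : ℝ → Evec d → ℝ) : Prop where
  cont : ContinuousOn (fun q : ℝ × Evec d => u q.1 q.2) (Set.Icc 0 T ×ˢ Set.univ)
  tdiff : ∀ x, ∀ t ∈ Set.Icc (0 : ℝ) T, DifferentiableAt ℝ (fun s => u s x) t
  xsmooth : ∀ t ∈ Set.Icc (0 : ℝ) T, ContDiff ℝ 2 (u t)
  pde : ∀ t ∈ Set.Ico (0 : ℝ) T, ∀ x, PDEholds b f sig u t x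
  terminal : ∀ x, u T x = H x

/-- `u` is continuous on `[0,T]×ℝ^d` and `C^{1,2}` on `[0,T)×ℝ^d`, solving (E). -/
structure IsSolOpen (d : ℕ) (T : ℝ) (b : Evec d → ℝ → Evec d → Evec d)
    (f : Evec d → ℝ → Evec d → ℝ) (sig : Evec d → ℝ → (Evec d →L[ℝ] Evec d))
    (H : Evec d → ℝ) (u : ℝ → Evec d → ℝ) : Prop where
  cont : ContinuousOn (fun q : ℝ × Evec d => u q.1 q.2) (Set.Icc 0 T ×ˢ Set.univ)
  tdiff : ∀ x, ∀ t ∈ Set.Ico (0 : ℝ) T, DifferentiableAt ℝ (fun s => u s x) t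
  xsmooth : ∀ t ∈ Set.Ico (0 : ℝ) T, ContDiff ℝ 2 (u t)
  pde : ∀ t ∈ Set.Ico (0 : ℝ) T, ∀ x, PDEholds b f sig u t x
  terminal : ∀ x, u T x = H x

/-- Regularity bounds of Theorem 2.1 with constant `C`. -/
def SolRegular (d : ℕ) (T C : ℝ) (u : ℝ → Evec d → ℝ) : Prop :=
  ∀ t ∈ Set.Icc (0 : ℝ) T, ∀ x : Evec d,
    (|u t x| + ‖gradient (u t) x‖ + ‖fderiv ℝ (gradient (u t)) x‖ +
        |deriv (fun s => u s x) t| ≤ C) ∧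
      ∀ t' ∈ Set.Icc (0 : ℝ) T,
        ‖gradient (u t) x - gradient (u t') x‖ ≤ C * |t - t'| ^ ((1 : ℝ) / 2)

/-! ### Spatial grids -/

/-- The infinite lattice `δ ℤ^d`. -/
def latticeSet (d : ℕ) (δ : ℝ) : Set (Evec d) :=
  {x | ∀ j, ∃ m : ℤ, x j = δ * m}

/-- The half-open truncation cube of radius about `r` (set `Δ_i`). -/
def cubeSet (d : ℕ) (δ r : ℝ) : Set (Evec d) :=
  {x | ∀ j, -(δ * (⌊r / δ⌋ : ℤ)) - δ / 2 ≤ x j ∧ x j < δ * (⌊r / δ⌋ : ℤ) + δ / 2}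

/-- The truncated grid `C_i = δℤ^d ∩ Δ_i`. -/
def gridC (d : ℕ) (δ r : ℝ) : Set (Evec d) := latticeSet d δ ∩ cubeSet d δ r

/-- Projection `Π_∞` on the lattice `δ ℤ^d`. -/
def projInf (d : ℕ) (δ : ℝ) (x : Evec d) : Evec d :=
  (EuclideanSpace.equiv (Fin d) ℝ).symm fun j => δ * (⌊x j / δ + 1 / 2⌋ : ℤ)

/-- Componentwise projection `Q(r,·)` on the hypercube `[-δ⌊r/δ⌋, δ⌊r/δ⌋]^d`. -/
def projQ (d : ℕ) (δ r : ℝ) (y : Evec d) : Evec d :=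
  (EuclideanSpace.equiv (Fin d) ℝ).symm fun j =>
    max (-(δ * (⌊r / δ⌋ : ℤ))) (min (δ * (⌊r / δ⌋ : ℤ)) (y j))

/-- The projection `Π_i = Q(r, Π_∞(·))` on the truncated grid of radius `r`. -/
def projTrunc (d : ℕ) (δ r : ℝ) (x : Evec d) : Evec d := projQ d δ r (projInf d δ x)

/-- Quantized increment `g(w) = h^{1/2} G(h^{-1/2} w)`. -/
def quantz {d : ℕ} (G : Evec d → Evec d) (h : ℝ) (w : Evec d) : Evec d :=
  Real.sqrt h • G ((Real.sqrt h)⁻¹ • w)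

/-- Sup norm `|z|_∞` on `ℝ^d`. -/
def supN {d : ℕ} (z : Evec d) : ℝ := ⨆ j : Fin d, |z j|

/-! ### Error terms -/

def Etime (h : ℝ) : ℝ := Real.sqrt h
def Espace (h δ : ℝ) : ℝ := h⁻¹ * δ
def Etrunc (R ρ : ℝ) : ℝ := R / (R + ρ)
def Equant (d : ℕ) (h : ℝ) (M : ℕ) : ℝ := (Real.sqrt h)⁻¹ * (M : ℝ) ^ (-(1 / (d : ℝ)))
def Egrad (d : ℕ) (h δ : ℝ) (M : ℕ) (p : ℝ) : ℝ :=
  h ^ (p / 2 + (d : ℝ) / 4 - 1 / 2) * (M : ℝ) ^ (-(p / (d : ℝ))) * δ ^ (-(p + (d : ℝ) / 2))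
def EglobSq (d : ℕ) (h δ R ρ : ℝ) (M : ℕ) (p : ℝ) : ℝ :=
  Etime h ^ 2 + Espace h δ ^ 2 + Etrunc R ρ ^ 2 + Equant d h M ^ 2 + Egrad d h δ M p ^ 2

/-! ### The discretization data and Algorithm 3.1 -/

/-- All the data entering Algorithm 3.1. -/
structure Disc (d : ℕ) where
  b : Evec d → ℝ → Evec d → Evec d
  f : Evec d → ℝ → Evec d → ℝ
  sig : Evec d → ℝ → (Evec d →L[ℝ] Evec d)
  H : Evec d → ℝ
  G : Evec d → Evec d
  h : ℝ
  δ : ℝ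
  R : ℝ
  ρ : ℝ
  M : ℕ
  N : ℕ

namespace Disc

variable {d : ℕ}

/-- Radius of the grid `C_i`. -/
def radAt (S : Disc d) (i : ℕ) : ℝ := if i = 0 then S.R else S.R + S.ρ

/-- The projection `Π_{k+1}` (radius `R + ρ`). -/
def proj1 (S : Disc d) (x : Evec d) : Evec d := projTrunc d S.δ (S.R + S.ρ) x

/-- The intermediate gradient predictor `v̂` built from the data at the next time. -/
def vhatOf (S : Disc d) (ub : Evec d → ℝ) (vb : Evec d → Evec d) (x : Evec d) : Evec d :=
  ∫ w, vb (S.proj1 (x + (S.sig x (ub x)) (quantz S.G S.h w))) ∂(gaussE d S.h)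

/-- The transition `T(t_k, x)` as a function of the increment `w`. -/
def transOf (S : Disc d) (ub : Evec d → ℝ) (vb : Evec d → Evec d) (x w : Evec d) : Evec d :=
  S.h • S.b x (ub x) (S.vhatOf ub vb x) + (S.sig x (ub x)) (quantz S.G S.h w)

/-- One-step update of the gradient approximation `v̄`. -/
def vstep (S : Disc d) (ub : Evec d → ℝ) (vb : Evec d → Evec d) (x : Evec d) : Evec d :=
  S.h⁻¹ • ∫ w, ub (S.proj1 (x + S.transOf ub vb x w)) • quantz S.G S.h w ∂(gaussE d S.h)

/-- One-step update of the solution approximation `ū`. -/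
def ustep (S : Disc d) (ub : Evec d → ℝ) (vb : Evec d → Evec d) (x : Evec d) : ℝ :=
  (∫ w, ub (S.proj1 (x + S.transOf ub vb x w)) ∂(gaussE d S.h)) +
    S.f x (ub x) (S.vstep ub vb x) * S.h

/-- Backward recursion of Algorithm 3.1; `algAux j` are the values `(ū, v̄)` at time
index `N - j`. -/
def algAux (S : Disc d) : ℕ → (Evec d → ℝ) × (Evec d → Evec d)
  | 0 => (S.H, fun x => (ContinuousLinearMap.adjoint (S.sig x (S.H x))) (gradient S.H x))
  | j + 1 => (S.ustep (S.algAux j).1 (S.algAux j).2, S.vstep (S.algAux j).1 (S.algAux j).2)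

/-- `ū(t_k, ·)`. -/
def ubar (S : Disc d) (k : ℕ) : Evec d → ℝ := (S.algAux (S.N - k)).1

/-- `v̄(t_k, ·)`. -/
def vbar (S : Disc d) (k : ℕ) : Evec d → Evec d := (S.algAux (S.N - k)).2

/-- `v̂(t_k, ·)`. -/
def vhat (S : Disc d) (k : ℕ) : Evec d → Evec d := S.vhatOf (S.ubar (k + 1)) (S.vbar (k + 1))

/-- The transition `T(t_k, x)` of Algorithm 3.1, as a function of the increment. -/
def trans (S : Disc d) (k : ℕ) (x w : Evec d) : Evec d :=
  S.transOf (S.ubar (k + 1)) (S.vbar (k + 1)) x w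

variable {Ω : Type}

/-- The discrete forward process started from `ξ` at time index `i`. -/
def Xfrom (S : Disc d) (ΔB : ℕ → Ω → Evec d) (i : ℕ) (ξ : Ω → Evec d) : ℕ → Ω → Evec d
  | 0 => ξ
  | k + 1 =>
    if k + 1 ≤ i then ξ
    else fun ω =>
      S.proj1 (S.Xfrom ΔB i ξ k ω + S.trans k (S.Xfrom ΔB i ξ k ω) (ΔB k ω))

/-- The discrete forward process started from `x₀` at time `0`. -/
def Xproc (S : Disc d) (ΔB : ℕ → Ω → Evec d) (x0 : Evec d) : ℕ → Ω → Evec d :=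
  S.Xfrom ΔB 0 fun _ => x0

/-- The chain (started at `(t_i, ξ)`) attempts to exit the truncation cube at step `m`. -/
def viol (S : Disc d) (ΔB : ℕ → Ω → Evec d) (i : ℕ) (ξ : Ω → Evec d) (m : ℕ) (ω : Ω) :
    Prop :=
  S.Xfrom ΔB i ξ m ω + S.trans m (S.Xfrom ΔB i ξ m ω) (ΔB m ω) ∉ cubeSet d S.δ (S.R + S.ρ)

/-- The event `{t_k < τ_∞}`: no exit up to time `t_k`. -/
def noExit (S : Disc d) (ΔB : ℕ → Ω → Evec d) (i : ℕ) (ξ : Ω → Evec d) (k : ℕ) (ω : Ω) :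
    Prop :=
  ∀ m, i ≤ m → m < k → ¬S.viol ΔB i ξ m ω

/-- The event `{τ_∞ < +∞}`. -/
def exitEvent (S : Disc d) (ΔB : ℕ → Ω → Evec d) (i : ℕ) (ξ : Ω → Evec d) : Set Ω :=
  {ω | ∃ m, i ≤ m ∧ m < S.N ∧ S.viol ΔB i ξ m ω}

/-- The time index of `τ_∞` (equal to `N + 1` when `τ_∞ = +∞`). -/
def tauIdx (S : Disc d) (ΔB : ℕ → Ω → Evec d) (i : ℕ) (ξ : Ω → Evec d) (ω : Ω) : ℕ :=
  if hv : ∃ m, i ≤ m ∧ m < S.N ∧ S.viol ΔB i ξ m ω then Nat.find hv + 1 else S.N + 1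

/-- The supremum `‖Σ‖_∞` of `σ(x, ū(t_k, x))` over the grids. -/
def sigNorm (S : Disc d) : ℝ :=
  ⨆ k : Fin (S.N + 1), ⨆ x : ↥(gridC d S.δ (S.radAt k)), ‖S.sig (x : Evec d) (S.ubar k x)‖

end Disc

/-- The discrete filtration `F_{t_k}` generated by the increments `ΔB^0, …, ΔB^{k-1}`. -/
def filtOf {d : ℕ} {Ω : Type} (ΔB : ℕ → Ω → Evec d) (k : ℕ) : MeasurableSpace Ω :=
  ⨆ m ∈ Finset.range k, MeasurableSpace.comap (ΔB m) inferInstance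

/-- Standing assumptions on the discretization data, with smallness threshold `c` for `h`. -/
structure GoodSetting (d : ℕ) (T K lam alpha : ℝ) (CQ : ℝ → ℝ) (c : ℝ) (S : Disc d) :
    Prop where
  hd : 0 < d
  hT : 0 < T
  hA : AssumptionA d K lam alpha S.b S.f S.sig S.H
  hN : 0 < S.N
  hh : S.h = T / S.N
  hhc : S.h < c
  hδpos : 0 < S.δ
  hδh : S.δ ^ 2 < S.h
  hMpos : 0 < S.M
  hMh : (S.M : ℝ) ^ (-(2 / (d : ℝ))) < S.h
  hR : 0 < S.R
  hρ : 1 ≤ S.ρ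
  hGmeas : Measurable S.G
  hGnear : ∃ Λ : Finset (Evec d), Λ.Nonempty ∧ Λ.card = S.M ∧
    ∀ w, S.G w ∈ Λ ∧ ∀ y ∈ Λ, ‖w - S.G w‖ ≤ ‖w - y‖
  hquant : ∀ q : ℝ, 1 ≤ q →
    (∫ w, ‖quantz S.G S.h w - w‖ ^ q ∂(gaussE d S.h)) ≤
      (CQ q * Real.sqrt S.h * (S.M : ℝ) ^ (-(1 / (d : ℝ)))) ^ q

/-- Standing assumptions on the driving noise: i.i.d. `N(0, h I_d)` increments. -/
structure GoodProb {d : ℕ} (S : Disc d) {Ω : Type} [MeasurableSpace Ω] (P : Measure Ω)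
    (ΔB : ℕ → Ω → Evec d) : Prop where
  hP : IsProbabilityMeasure P
  hmeas : ∀ k, Measurable (ΔB k)
  hlaw : ∀ k, Measure.map (ΔB k) P = gaussE d S.h
  hindep : iIndepFun ΔB P

end

/-!
The symmetric grid `{± log (n / k) : 1 ≤ k ≤ n}` has `2n - 1` points and lies within `exp |s| / n`
of every `s ∈ ℝ`: near `log (n / k)` consecutive points are about `1 / k ≈ exp s / n` apart.
Taking `m ≈ M ^ (1 / d)` such points on each axis gives an `M`-point product grid in `ℝ^d` within
`4 √d M ^ (-1 / d) exp ‖x‖` of every `x`, so the `p`-th power distortion is at most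
`(4 √d M ^ (-1 / d)) ^ p ∫ exp (p ‖x‖) dγ_d`, and the integral is finite by Fernique's theorem.
A nearest-point projection attains the minimum pointwise, so its error has the same integral.
-/

noncomputable def logGrid (n : ℕ) : Finset ℝ :=
  (Finset.Icc 1 n).image (fun k : ℕ => log (n / k)) ∪
    (Finset.Icc 1 n).image (fun k : ℕ => -log (n / k))

lemma card_logGrid_le {n : ℕ} (hn : 0 < n) : (logGrid n).card ≤ 2 * n - 1 := by
  have hzero : (0 : ℝ) ∈ (Finset.Icc 1 n).image (fun k : ℕ => log (n / k)) ∩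
      (Finset.Icc 1 n).image (fun k : ℕ => -log (n / k)) := by
    have hn' : (n : ℝ) ≠ 0 := by positivity
    simp only [Finset.mem_inter, Finset.mem_image, Finset.mem_Icc]
    exact ⟨⟨n, ⟨hn, le_rfl⟩, by simp [hn']⟩, ⟨n, ⟨hn, le_rfl⟩, by simp [hn']⟩⟩
  have hunion := Finset.card_union_add_card_inter
    ((Finset.Icc 1 n).image (fun k : ℕ => log (n / k)))
    ((Finset.Icc 1 n).image (fun k : ℕ => -log (n / k)))
  have h₁ := (Finset.Icc 1 n).card_image_le (f := fun k : ℕ => log (n / k))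
  have h₂ := (Finset.Icc 1 n).card_image_le (f := fun k : ℕ => -log (n / k))
  have hinter := Finset.card_pos.2 ⟨0, hzero⟩
  rw [Nat.card_Icc] at h₁ h₂
  unfold logGrid
  omega

lemma exists_abs_sub_log_div_le {n : ℕ} (hn : 0 < n) {u : ℝ} (hu : 0 ≤ u) :
    ∃ k ∈ Finset.Icc 1 n, |u - log (n / k)| ≤ exp u / n := by
  have hn' : (0 : ℝ) < n := by exact_mod_cast hn
  set k := ⌈n * exp (-u)⌉₊
  have hk_ge : n * exp (-u) ≤ k := Nat.le_ceil _
  have hk_lt : (k : ℝ) < n * exp (-u) + 1 := Nat.ceil_lt_add_one (by positivity)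
  have hk_pos : 0 < k := Nat.ceil_pos.2 (by positivity)
  have hk' : (0 : ℝ) < k := by exact_mod_cast hk_pos
  refine ⟨k, Finset.mem_Icc.2 ⟨hk_pos, Nat.ceil_le.2 ?_⟩, ?_⟩
  · calc (n : ℝ) * exp (-u) ≤ n * 1 := by gcongr; exact exp_le_one_iff.2 (by linarith)
      _ = n := mul_one _
  -- `u - log (n / k) = log x` with `x = k e^u / n ∈ [1, 1 + e^u / n)`, and `log x ≤ x - 1`
  have hexp : exp (-u) * exp u = 1 := by rw [← exp_add, neg_add_cancel, exp_zero]
  have hx : u - log (n / k) = log (k * exp u / n) := by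
    rw [log_div (by positivity) hn'.ne', log_div hn'.ne' hk'.ne',
      log_mul hk'.ne' (exp_pos u).ne', log_exp]
    ring
  have hx_ge : 1 ≤ k * exp u / n := by
    rw [le_div_iff₀ hn']
    nlinarith [exp_pos u]
  have hx_lt : k * exp u / n < 1 + exp u / n := by
    rw [div_lt_iff₀ hn', add_mul, div_mul_cancel₀ _ hn'.ne']
    nlinarith [exp_pos u]
  rw [hx, abs_of_nonneg (log_nonneg hx_ge)]
  linarith [log_le_sub_one_of_pos (by linarith : 0 < k * exp u / n)]

lemma exists_mem_logGrid_abs_sub_le {n : ℕ} (hn : 0 < n) (s : ℝ) :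
    ∃ t ∈ logGrid n, |s - t| ≤ exp |s| / n := by
  obtain ⟨k, hk, hnear⟩ := exists_abs_sub_log_div_le hn (abs_nonneg s)
  rcases le_or_gt 0 s with hs | hs
  · refine ⟨log (n / k), Finset.mem_union_left _ (Finset.mem_image_of_mem _ hk), ?_⟩
    rwa [abs_of_nonneg hs] at hnear ⊢
  · refine ⟨-log (n / k), Finset.mem_union_right _ (Finset.mem_image_of_mem _ hk), ?_⟩
    rw [abs_of_neg hs] at hnear ⊢
    rwa [sub_neg_eq_add, ← abs_neg, neg_add']

lemma exists_finset_real_card_le_abs_sub_le (m : ℕ) (hm : 0 < m) :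
    ∃ Λ : Finset ℝ, Λ.card ≤ m ∧ ∀ s, ∃ t ∈ Λ, |s - t| ≤ 2 * exp |s| / m := by
  have hn : 0 < (m + 1) / 2 := by omega
  have hmn : (m : ℝ) ≤ 2 * ((m + 1) / 2 : ℕ) := by
    exact_mod_cast (by omega : m ≤ 2 * ((m + 1) / 2))
  refine ⟨logGrid ((m + 1) / 2), (card_logGrid_le hn).trans (by omega), fun s => ?_⟩
  obtain ⟨t, ht, hst⟩ := exists_mem_logGrid_abs_sub_le hn s
  refine ⟨t, ht, hst.trans ?_⟩
  rw [div_le_div_iff₀ (by positivity) (by positivity)]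
  nlinarith [exp_pos |s|]

lemma EuclideanSpace.norm_le_sqrt_card_mul {ι : Type*} [Fintype ι] (x : EuclideanSpace ℝ ι)
    {b : ℝ} (hb : 0 ≤ b) (hx : ∀ i, |x i| ≤ b) : ‖x‖ ≤ √(Fintype.card ι) * b := by
  rw [EuclideanSpace.norm_eq, ← sqrt_sq hb, ← sqrt_mul (Nat.cast_nonneg _)]
  refine sqrt_le_sqrt ?_
  calc ∑ i, ‖x i‖ ^ 2 ≤ ∑ _i : ι, b ^ 2 := by
        gcongr with i
        rw [norm_eq_abs]
        exact hx i
    _ = _ := by simp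

lemma exists_finset_euclideanSpace_card_le_norm_sub_le {ι : Type*} [Fintype ι] (m : ℕ)
    (hm : 0 < m) :
    ∃ Λ : Finset (EuclideanSpace ℝ ι), Λ.card ≤ m ^ Fintype.card ι ∧
      ∀ x, ∃ y ∈ Λ, ‖x - y‖ ≤ 2 * √(Fintype.card ι) * exp ‖x‖ / m := by
  obtain ⟨Λ₁, hcard, hnear⟩ := exists_finset_real_card_le_abs_sub_le m hm
  refine ⟨(Fintype.piFinset fun _ : ι => Λ₁).image (WithLp.toLp 2), ?_, fun x => ?_⟩
  · refine Finset.card_image_le.trans ?_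
    rw [Fintype.card_piFinset, Finset.prod_const, Finset.card_univ]
    exact Nat.pow_le_pow_left hcard _
  choose t ht hxt using fun i => hnear (x i)
  refine ⟨WithLp.toLp 2 t, Finset.mem_image_of_mem _ (Fintype.mem_piFinset.2 ht), ?_⟩
  rw [mul_comm 2, mul_assoc, mul_div_assoc]
  refine EuclideanSpace.norm_le_sqrt_card_mul _ (by positivity) fun i => ?_
  calc |x i - t i| ≤ 2 * exp |x i| / m := hxt i
    _ ≤ 2 * exp ‖x‖ / m := by
        gcongr
        simpa using PiLp.norm_apply_le x i

lemma exists_nat_pow_le_and_inv_le {d : ℕ} (hd : 0 < d) {M : ℕ} (hM : 0 < M) :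
    ∃ m : ℕ, 0 < m ∧ m ^ d ≤ M ∧ (m : ℝ)⁻¹ ≤ 2 * (M : ℝ) ^ (-(1 / (d : ℝ))) := by
  have hM' : (1 : ℝ) ≤ M := by exact_mod_cast hM
  set r := (M : ℝ) ^ (d : ℝ)⁻¹ with hr
  have hr1 : 1 ≤ r := one_le_rpow hM' (by positivity)
  have hm : 0 < ⌊r⌋₊ := Nat.floor_pos.2 hr1
  have hm' : (0 : ℝ) < ⌊r⌋₊ := by exact_mod_cast hm
  refine ⟨⌊r⌋₊, hm, ?_, ?_⟩
  · have : (⌊r⌋₊ : ℝ) ^ d ≤ M :=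
      (pow_le_pow_left₀ hm'.le (Nat.floor_le (by positivity)) d).trans_eq
        (rpow_inv_natCast_pow (by positivity) hd.ne')
    exact_mod_cast this
  · have hlt : r < ⌊r⌋₊ + 1 := Nat.lt_floor_add_one r
    have hm1 : (1 : ℝ) ≤ ⌊r⌋₊ := by exact_mod_cast hm
    rw [one_div, rpow_neg (by positivity), ← hr, inv_le_iff_one_le_mul₀ hm']
    calc (1 : ℝ) = r * r⁻¹ := (mul_inv_cancel₀ (by positivity)).symm
      _ ≤ (2 * ⌊r⌋₊) * r⁻¹ := by gcongr; linarith
      _ = 2 * r⁻¹ * ⌊r⌋₊ := by ring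

lemma exists_finset_card_le_norm_sub_le_mul_exp {d : ℕ} (hd : 0 < d) {M : ℕ} (hM : 0 < M) :
    ∃ Λ : Finset (EuclideanSpace ℝ (Fin d)), Λ.card ≤ M ∧
      ∀ x, ∃ y ∈ Λ, ‖x - y‖ ≤ 4 * √d * (M : ℝ) ^ (-(1 / (d : ℝ))) * exp ‖x‖ := by
  obtain ⟨m, hm, hmM, hm_inv⟩ := exists_nat_pow_le_and_inv_le hd hM
  obtain ⟨Λ, hcard, hnear⟩ := exists_finset_euclideanSpace_card_le_norm_sub_le (ι := Fin d) m hm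
  rw [Fintype.card_fin] at hcard hnear
  refine ⟨Λ, hcard.trans hmM, fun x => ?_⟩
  obtain ⟨y, hy, hxy⟩ := hnear x
  refine ⟨y, hy, hxy.trans ?_⟩
  calc 2 * √d * exp ‖x‖ / m = 2 * √d * exp ‖x‖ * (m : ℝ)⁻¹ := div_eq_mul_inv _ _
    _ ≤ 2 * √d * exp ‖x‖ * (2 * (M : ℝ) ^ (-(1 / (d : ℝ)))) := by gcongr
    _ = 4 * √d * (M : ℝ) ^ (-(1 / (d : ℝ))) * exp ‖x‖ := by ring

lemma integral_inf'_norm_sub_rpow_le {E : Type*} [NormedAddCommGroup E] [MeasurableSpace E]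
    {μ : Measure E} {p ε : ℝ} {w : E → ℝ} (hp : 0 ≤ p) (hε : 0 ≤ ε) (hw : ∀ x, 0 ≤ w x)
    (hwp : Integrable (fun x => w x ^ p) μ) {Λ : Finset E} (hΛ : Λ.Nonempty)
    (hnear : ∀ x, ∃ y ∈ Λ, ‖x - y‖ ≤ ε * w x) :
    ∫ x, Λ.inf' hΛ (fun y => ‖x - y‖ ^ p) ∂μ ≤ ε ^ p * ∫ x, w x ^ p ∂μ := by
  rw [← integral_const_mul]
  refine integral_mono_of_nonneg (ae_of_all _ fun x => ?_) (hwp.const_mul _)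
    (ae_of_all _ fun x => ?_)
  · exact Finset.le_inf' hΛ _ fun y _ => rpow_nonneg (norm_nonneg _) p
  obtain ⟨y, hy, hxy⟩ := hnear x
  calc Λ.inf' hΛ (fun y => ‖x - y‖ ^ p) ≤ ‖x - y‖ ^ p := Finset.inf'_le _ hy
    _ ≤ (ε * w x) ^ p := rpow_le_rpow (norm_nonneg _) hxy hp
    _ = ε ^ p * w x ^ p := mul_rpow hε (hw x)

lemma integral_norm_sub_nearest_rpow_eq {Ω E : Type*} [MeasurableSpace Ω] [NormedAddCommGroup E]
    [MeasurableSpace E] [OpensMeasurableSpace E] {P : Measure Ω} {Δ : Ω → E} {p : ℝ}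
    (hp : 0 ≤ p) {Λ : Finset E} (hΛ : Λ.Nonempty) {G : E → E}
    (hG : ∀ x, G x ∈ Λ ∧ ∀ y ∈ Λ, ‖x - G x‖ ≤ ‖x - y‖) (hΔ : Measurable Δ) :
    ∫ ω, ‖Δ ω - G (Δ ω)‖ ^ p ∂P = ∫ x, Λ.inf' hΛ (fun y => ‖x - y‖ ^ p) ∂(P.map Δ) := by
  have hcont : Continuous fun x => Λ.inf' hΛ (fun y => ‖x - y‖ ^ p) :=
    Continuous.finset_inf'_apply hΛ fun y _ =>
      (continuous_id.sub continuous_const).norm.rpow_const fun _ => Or.inr hp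
  rw [integral_map hΔ.aemeasurable hcont.aestronglyMeasurable]
  congr with ω
  exact le_antisymm
    (Finset.le_inf' hΛ _ fun y hy => rpow_le_rpow (norm_nonneg _) ((hG _).2 y hy) hp)
    (Finset.inf'_le _ (hG _).1)

lemma ProbabilityTheory.IsGaussian.integrable_exp_mul_norm {E : Type*} [NormedAddCommGroup E]
    [NormedSpace ℝ E] [CompleteSpace E] [SecondCountableTopology E] [MeasurableSpace E]
    [BorelSpace E] (μ : Measure E) [IsGaussian μ] (t : ℝ) :
    Integrable (fun x => exp (t * ‖x‖)) μ := by
  obtain ⟨c, hc, hint⟩ := IsGaussian.exists_integrable_exp_sq μ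
  refine (hint.const_mul (exp (t ^ 2 / (4 * c)))).mono'
    (continuous_exp.comp (continuous_const.mul continuous_norm)).aestronglyMeasurable
    (ae_of_all _ fun x => ?_)
  rw [norm_of_nonneg (exp_pos _).le, ← exp_add]
  refine exp_le_exp.2 (sub_nonneg.1 ?_)
  have : t ^ 2 / (4 * c) + c * ‖x‖ ^ 2 - t * ‖x‖ = (t - 2 * c * ‖x‖) ^ 2 / (4 * c) := by
    field_simp
    ring
  rw [this]
  positivity

lemma gaussE_one (d : ℕ) : gaussE d 1 = stdGaussian (Evec d) := by
  rw [gaussE, Real.toNNReal_one, ← map_pi_eq_stdGaussian]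
  rfl

/-- Quantization of the standard Gaussian measure (justification of (3.8)): optimal
`M`-point grids achieve a distortion of order `M^{-1/d}`, and consequently any nearest
point projection on such a grid quantizes a standard Gaussian vector at rate `M^{-1/d}`. -/
theorem gaussian_quantization (d : ℕ) (hd : 0 < d) (p : ℝ) (hp : 1 ≤ p) :
    ∃ C : ℝ, 0 < C ∧
      ∀ M : ℕ, 0 < M →
        ∃ (Λ : Finset (Evec d)) (hΛ : Λ.Nonempty), Λ.card ≤ M ∧
          (∫ x, Λ.inf' hΛ (fun y => ‖x - y‖ ^ p) ∂(gaussE d 1)) ≤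
            (C * (M : ℝ) ^ (-(1 / (d : ℝ)))) ^ p ∧
          ∀ G : Evec d → Evec d, Measurable G →
            (∀ x, G x ∈ Λ ∧ ∀ y ∈ Λ, ‖x - G x‖ ≤ ‖x - y‖) →
            ∀ (Ω : Type) (_ : MeasurableSpace Ω) (P : Measure Ω) (Δ : Ω → Evec d),
              IsProbabilityMeasure P → Measurable Δ → Measure.map Δ P = gaussE d 1 →
              (∫ ω, ‖Δ ω - G (Δ ω)‖ ^ p ∂P) ≤ (C * (M : ℝ) ^ (-(1 / (d : ℝ)))) ^ p := by
  have hp0 : 0 < p := zero_lt_one.trans_le hp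
  rw [gaussE_one]
  set I := ∫ x, exp ‖x‖ ^ p ∂(stdGaussian (Evec d))
  have hI : Integrable (fun x => exp ‖x‖ ^ p) (stdGaussian (Evec d)) := by
    simpa only [← exp_mul, mul_comm] using IsGaussian.integrable_exp_mul_norm _ p
  have hI_pos : 0 < I := by
    simpa only [exp_mul] using
      integral_exp_pos (f := fun x => ‖x‖ * p) (by simpa only [exp_mul] using hI)
  refine ⟨4 * √d * I ^ p⁻¹,
    mul_pos (mul_pos four_pos (sqrt_pos.2 (Nat.cast_pos.2 hd))) (rpow_pos_of_pos hI_pos _),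
    fun M hM => ?_⟩
  obtain ⟨Λ, hcard, hnear⟩ := exists_finset_card_le_norm_sub_le_mul_exp hd hM
  have hΛ : Λ.Nonempty := let ⟨y, hy, _⟩ := hnear 0; ⟨y, hy⟩
  have hbound : ∫ x, Λ.inf' hΛ (fun y => ‖x - y‖ ^ p) ∂(stdGaussian (Evec d)) ≤
      (4 * √d * I ^ p⁻¹ * (M : ℝ) ^ (-(1 / (d : ℝ)))) ^ p :=
    calc _ ≤ (4 * √d * (M : ℝ) ^ (-(1 / (d : ℝ)))) ^ p * I :=
          integral_inf'_norm_sub_rpow_le hp0.le (by positivity) (fun _ => (exp_pos _).le) hI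
            hΛ hnear
      _ = (4 * √d * (M : ℝ) ^ (-(1 / (d : ℝ))) * I ^ p⁻¹) ^ p := by
          rw [mul_rpow (y := I ^ p⁻¹) (by positivity) (by positivity),
            rpow_inv_rpow hI_pos.le hp0.ne']
      _ = _ := by rw [mul_right_comm]
  refine ⟨Λ, hΛ, hcard, hbound, ?_⟩
  rintro G - hG Ω _ P Δ - hΔ hlaw
  rwa [integral_norm_sub_nearest_rpow_eq hp0.le hΛ hG hΔ, hlaw]
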